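/- Let K be an O-category and let α : Φ ⇒ A be an O-colimit of an ω-chain Φ of embeddings (so each α_n is an embedding and ⊔_n α_n ∘ α_n^p = id_A). Then α is a colimiting cocone in K: for every cocone δ : Φ ⇒ D in K there is a unique morphism γ : A → D with γ ∘ α_n = δ_n for all n, and this unique morphism equals ⊔_n δ_n ∘ α_n^p. -/

import Mathlib

open CategoryTheory OmegaCompletePartialOrder

universe v u

class OHom (K : Type u) [Category.{v} K] where
  homOrder : ∀ X Y : K, OmegaCompletePartialOrder (X ⟶ Y)

attribute [instance] OHom.homOrder

/-- An O-category: a category enriched in dcpos with continuous composition. -/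
class OCat (K : Type u) [Category.{v} K] extends OHom K where
  comp_mono : ∀ {X Y Z : K} {f f' : X ⟶ Y} {g g' : Y ⟶ Z},
    f ≤ f' → g ≤ g' → f ≫ g ≤ f' ≫ g'
  comp_cont_left : ∀ {X Y Z : K} (g : Y ⟶ Z) (c : Chain (X ⟶ Y))
    (hm : Monotone fun n => c n ≫ g),
    ωSup c ≫ g = ωSup ⟨fun n => c n ≫ g, hm⟩
  comp_cont_right : ∀ {X Y Z : K} (f : X ⟶ Y) (c : Chain (Y ⟶ Z))
    (hm : Monotone fun n => f ≫ c n),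
    f ≫ ωSup c = ωSup ⟨fun n => f ≫ c n, hm⟩

/-!
The candidate mediating morphism is `γ = ⊔ₙ αₙᵖ ≫ δₙ`; the chain is ascending because
`αₙᵖ ≫ eₙ ≤ αₙ₊₁ᵖ`, which follows from `αₙᵖ ≫ αₙ ≤ 𝟙`.
Precomposing with `αₙ` gives a chain that is eventually constant with value `δₙ`, since for
`n ≤ m` the map `αₙ` factors through `αₘ` and `αₘ ≫ αₘᵖ = 𝟙`.
Uniqueness: any mediating `γ` satisfies `γ = (⊔ₙ αₙᵖ ≫ αₙ) ≫ γ = ⊔ₙ αₙᵖ ≫ δₙ`.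
-/

theorem OmegaCompletePartialOrder.ωSup_eq_of_forall_ge_eq {α : Type*}
    [OmegaCompletePartialOrder α] {c : Chain α} {x : α} {n : ℕ}
    (h : ∀ m, n ≤ m → c m = x) : ωSup c = x :=
  le_antisymm
    (ωSup_le _ _ fun m => (c.monotone (le_max_left m n)).trans_eq (h _ (le_max_right m n)))
    ((h n le_rfl).symm.trans_le (le_ωSup c n))

namespace OCat

variable {K : Type u} [Category.{v} K] [OCat K]

def precomp {X Y : K} (f : X ⟶ Y) (Z : K) : (Y ⟶ Z) →o (X ⟶ Z) :=
  ⟨(f ≫ ·), fun _ _ h => comp_mono le_rfl h⟩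

def postcomp (X : K) {Y Z : K} (g : Y ⟶ Z) : (X ⟶ Y) →o (X ⟶ Z) :=
  ⟨(· ≫ g), fun _ _ h => comp_mono h le_rfl⟩

theorem comp_ωSup {X Y Z : K} (f : X ⟶ Y) (c : Chain (Y ⟶ Z)) :
    f ≫ ωSup c = ωSup (c.map (precomp f Z)) :=
  comp_cont_right f c (c.map (precomp f Z)).monotone

theorem ωSup_comp {X Y Z : K} (c : Chain (X ⟶ Y)) (g : Y ⟶ Z) :
    ωSup c ≫ g = ωSup (c.map (postcomp X g)) :=
  comp_cont_left g c (c.map (postcomp X g)).monotone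

end OCat

section OmegaChain

variable {K : Type u} [Category.{v} K] {Φ : ℕ → K} (e : ∀ n, Φ n ⟶ Φ (n + 1))

def chainMap (n : ℕ) : ∀ k, Φ n ⟶ Φ (n + k)
  | 0 => 𝟙 _
  | k + 1 => chainMap n k ≫ e (n + k)

variable {e}

theorem chainMap_comp_cocone {D : K} {δ : ∀ n, Φ n ⟶ D}
    (hδ : ∀ n, e n ≫ δ (n + 1) = δ n) (n : ℕ) :
    ∀ k, chainMap e n k ≫ δ (n + k) = δ n
  | 0 => Category.id_comp _
  | k + 1 => (Category.assoc _ _ _).trans <|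
    (congrArg (chainMap e n k ≫ ·) (hδ (n + k))).trans (chainMap_comp_cocone hδ n k)

variable {A D : K} {α : ∀ n, Φ n ⟶ A} {αp : ∀ n, A ⟶ Φ n} {δ : ∀ n, Φ n ⟶ D}

theorem cocone_comp_proj_comp_cocone_of_le (hα : ∀ n, e n ≫ α (n + 1) = α n)
    (hδ : ∀ n, e n ≫ δ (n + 1) = δ n) {n m : ℕ} (hα₁ : α m ≫ αp m = 𝟙 (Φ m))
    (hnm : n ≤ m) : α n ≫ αp m ≫ δ m = δ n := by
  obtain ⟨k, rfl⟩ := Nat.exists_eq_add_of_le hnm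
  rw [← chainMap_comp_cocone hα n k, Category.assoc, ← Category.assoc (α _), hα₁,
    Category.id_comp, chainMap_comp_cocone hδ]

variable [OCat K]

theorem proj_comp_le_proj_succ {n : ℕ} (hα : e n ≫ α (n + 1) = α n)
    (hα₁ : α (n + 1) ≫ αp (n + 1) = 𝟙 (Φ (n + 1))) (hα₂ : αp n ≫ α n ≤ 𝟙 A) :
    αp n ≫ e n ≤ αp (n + 1) :=
  calc αp n ≫ e n = (αp n ≫ α n) ≫ αp (n + 1) := by
        rw [Category.assoc, ← hα, Category.assoc, hα₁, Category.comp_id]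
    _ ≤ 𝟙 A ≫ αp (n + 1) := OCat.comp_mono hα₂ le_rfl
    _ = αp (n + 1) := Category.id_comp _

theorem monotone_proj_comp_cocone (hα : ∀ n, e n ≫ α (n + 1) = α n)
    (hα₁ : ∀ n, α n ≫ αp n = 𝟙 (Φ n)) (hα₂ : ∀ n, αp n ≫ α n ≤ 𝟙 A)
    (hδ : ∀ n, e n ≫ δ (n + 1) = δ n) : Monotone fun n => αp n ≫ δ n :=
  monotone_nat_of_le_succ fun n => by
    rw [← hδ n, ← Category.assoc]
    exact OCat.comp_mono (proj_comp_le_proj_succ (hα n) (hα₁ (n + 1)) (hα₂ n)) le_rfl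

theorem eq_ωSup_proj_comp_of_comp_eq (hαmono : Monotone fun n => αp n ≫ α n)
    (hαsup : ωSup ⟨fun n => αp n ≫ α n, hαmono⟩ = 𝟙 A) (hδmono : Monotone fun n => αp n ≫ δ n)
    {γ : A ⟶ D} (hγ : ∀ n, α n ≫ γ = δ n) : γ = ωSup ⟨fun n => αp n ≫ δ n, hδmono⟩ :=
  calc γ = ωSup ⟨fun n => αp n ≫ α n, hαmono⟩ ≫ γ := by rw [hαsup, Category.id_comp]
    _ = _ := by
      rw [OCat.ωSup_comp]
      congr 1
      ext n
      exact (Category.assoc _ _ _).trans (congrArg _ (hγ n))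

end OmegaChain

theorem ocolimit_is_colimit {K : Type u} [Category.{v} K] [OCat K]
    (Φ : ℕ → K) (e : ∀ n, Φ n ⟶ Φ (n + 1))
    (A : K) (α : ∀ n, Φ n ⟶ A) (αp : ∀ n, A ⟶ Φ n)
    (hαcocone : ∀ n, e n ≫ α (n + 1) = α n)
    (hα₁ : ∀ n, α n ≫ αp n = 𝟙 (Φ n)) (hα₂ : ∀ n, αp n ≫ α n ≤ 𝟙 A)
    (hαmono : Monotone fun n => αp n ≫ α n)
    (hαsup : ωSup ⟨fun n => αp n ≫ α n, hαmono⟩ = 𝟙 A)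
    (D : K) (δ : ∀ n, Φ n ⟶ D) (hδcocone : ∀ n, e n ≫ δ (n + 1) = δ n) :
    ∃ hm : Monotone fun n => αp n ≫ δ n,
      (∀ n, α n ≫ ωSup ⟨fun n => αp n ≫ δ n, hm⟩ = δ n) ∧
      (∀ γ : A ⟶ D, (∀ n, α n ≫ γ = δ n) → γ = ωSup ⟨fun n => αp n ≫ δ n, hm⟩) := by
  refine ⟨monotone_proj_comp_cocone hαcocone hα₁ hα₂ hδcocone, fun n => ?_, fun γ hγ => ?_⟩
  · rw [OCat.comp_ωSup]
    exact ωSup_eq_of_forall_ge_eq fun m hnm =>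
      cocone_comp_proj_comp_cocone_of_le hαcocone hδcocone (hα₁ m) hnm
  · exact eq_ωSup_proj_comp_of_comp_eq hαmono hαsup _ hγ
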